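/- arXiv:2102.09942 — 2 statements merged into one kernel-verified Lean document; each statement's English description precedes it below -/
import Mathlib

section
/- Suppose X, Y are complex numbers with Z := max(|X|, |Y|) > 0, that the product ∏_{j=1}^n |β_j| ≤ c_0 · Z^k, that i is an index (1 ≤ i ≤ n) with |β_i| = min_{1≤j≤n} |β_j|, and that Z ≥ c_{4i}. Then |β_i| ≤ c_{5i} · Z^{k−n+1}. (This is Lemma 1 of the paper; the exponent k−n+1 is the one the proof yields.) -/
/-!
Since `β i` is the smallest of the `β j`, the product bound gives `|β i| ≤ c₀^{1/n} Z^{k/n}`.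
For `j ≠ i`, eliminating `X` or `Y` from `β i` and `β j` (whichever realizes `Z`) gives
`c₁ Z ≤ |β j| + max(1, |α j|/|α i|) |β i| + c₃`, and once `Z ≥ c₄` the last two terms
are at most `ε c₁ Z / 2` and `(1 - ε) c₁ Z / 2`, so `|β j| ≥ c₁ Z / 2`. Feeding these lower
bounds back into the product bound isolates `|β i|`.
-/

open Finset

section Elimination

variable (X Y a b l m : ℂ)

theorem norm_sub_mul_norm_snd_le :
    ‖b - a‖ * ‖Y‖ ≤ ‖X - b * Y + m‖ + ‖X - a * Y + l‖ + ‖m - l‖ := by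
  have h : (b - a) * Y = (X - a * Y + l) - (X - b * Y + m) + (m - l) := by ring
  rw [← norm_mul, h]
  linarith [norm_add_le ((X - a * Y + l) - (X - b * Y + m)) (m - l),
    norm_sub_le (X - a * Y + l) (X - b * Y + m)]

theorem norm_sub_mul_norm_fst_le :
    ‖b - a‖ * ‖X‖ ≤ ‖a‖ * ‖X - b * Y + m‖ + ‖b‖ * ‖X - a * Y + l‖ + ‖a * m - b * l‖ := by
  have h : (b - a) * X = b * (X - a * Y + l) - a * (X - b * Y + m) + (a * m - b * l) := by ring
  rw [← norm_mul, h, ← norm_mul a, ← norm_mul b]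
  linarith [norm_add_le (b * (X - a * Y + l) - a * (X - b * Y + m)) (a * m - b * l),
    norm_sub_le (b * (X - a * Y + l)) (a * (X - b * Y + m))]

theorem norm_sub_mul_min_mul_max_le (ha : a ≠ 0) :
    ‖b - a‖ * min 1 (1 / ‖a‖) * max ‖X‖ ‖Y‖ ≤
      ‖X - b * Y + m‖ + max 1 (‖b‖ / ‖a‖) * ‖X - a * Y + l‖ +
        max ‖m - l‖ (‖a * m - b * l‖ / ‖a‖) := by
  have ha' : 0 < ‖a‖ := norm_pos_iff.mpr ha
  rcases le_total ‖X‖ ‖Y‖ with hXY | hYX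
  · rw [max_eq_right hXY]
    calc ‖b - a‖ * min 1 (1 / ‖a‖) * ‖Y‖ ≤ ‖b - a‖ * 1 * ‖Y‖ := by gcongr; exact min_le_left _ _
      _ ≤ ‖X - b * Y + m‖ + 1 * ‖X - a * Y + l‖ + ‖m - l‖ := by
        linarith [norm_sub_mul_norm_snd_le X Y a b l m]
      _ ≤ _ := by gcongr <;> exact le_max_left _ _
  · rw [max_eq_left hYX]
    calc ‖b - a‖ * min 1 (1 / ‖a‖) * ‖X‖ ≤ ‖b - a‖ * (1 / ‖a‖) * ‖X‖ := by
          gcongr; exact min_le_right _ _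
      _ ≤ (‖a‖ * ‖X - b * Y + m‖ + ‖b‖ * ‖X - a * Y + l‖ + ‖a * m - b * l‖) / ‖a‖ := by
        rw [mul_one_div, div_mul_eq_mul_div]
        gcongr
        exact norm_sub_mul_norm_fst_le X Y a b l m
      _ = ‖X - b * Y + m‖ + ‖b‖ / ‖a‖ * ‖X - a * Y + l‖ + ‖a * m - b * l‖ / ‖a‖ := by
        field_simp
      _ ≤ _ := by gcongr <;> exact le_max_right _ _

end Elimination

theorem le_mul_rpow_of_pow_le {x c Z : ℝ} {n k : ℕ} (hx : 0 ≤ x) (hc : 0 ≤ c) (hZ : 0 ≤ Z)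
    (hn : n ≠ 0) (h : x ^ n ≤ c * Z ^ k) : x ≤ c ^ ((1 : ℝ) / n) * Z ^ ((k : ℝ) / n) := by
  calc x = (x ^ n) ^ ((n : ℝ)⁻¹) := (Real.pow_rpow_inv_natCast hx hn).symm
    _ ≤ (c * Z ^ k) ^ ((n : ℝ)⁻¹) := by gcongr
    _ = c ^ ((1 : ℝ) / n) * Z ^ ((k : ℝ) / n) := by
      rw [Real.mul_rpow hc (by positivity), ← Real.rpow_natCast Z k, ← Real.rpow_mul hZ,
        one_div, div_eq_mul_inv]

theorem mul_rpow_le_of_rpow_div_sub_le {A Z n k : ℝ} (hA : 0 ≤ A) (hZ : 0 < Z) (hn : 0 < n)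
    (hk : k < n) (h : A ^ (n / (n - k)) ≤ Z) : A * Z ^ (k / n) ≤ Z := by
  have hnk : 0 < n - k := sub_pos.mpr hk
  have hA_le : A ≤ Z ^ ((n - k) / n) := by
    calc A = (A ^ (n / (n - k))) ^ ((n - k) / n) := by
          rw [← Real.rpow_mul hA, div_mul_div_cancel₀ hnk.ne', div_self hn.ne', Real.rpow_one]
      _ ≤ Z ^ ((n - k) / n) := by gcongr
  calc A * Z ^ (k / n) ≤ Z ^ ((n - k) / n) * Z ^ (k / n) := by gcongr
    _ = Z := by rw [← Real.rpow_add hZ, ← add_div, sub_add_cancel, div_self hn.ne', Real.rpow_one]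

theorem le_mul_rpow_of_prod_le {ι : Type*} [Fintype ι] [DecidableEq ι] {b c : ι → ℝ} {i : ι}
    {C Z : ℝ} {k : ℕ} (hZ : 0 < Z) (hbi : 0 ≤ b i) (hc : ∀ j ∈ univ.erase i, 0 < c j)
    (hlow : ∀ j ∈ univ.erase i, c j * Z / 2 ≤ b j) (hprod : ∏ j, b j ≤ C * Z ^ k) :
    b i ≤ (2 ^ (Fintype.card ι - 1) * C / ∏ j ∈ univ.erase i, c j) *
      Z ^ ((k : ℝ) - Fintype.card ι + 1) := by
  set m := Fintype.card ι - 1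
  have hcard : #(univ.erase i) = m := by rw [card_erase_of_mem (mem_univ i), card_univ]
  have hP : 0 < ∏ j ∈ univ.erase i, c j := prod_pos hc
  have hrest : (∏ j ∈ univ.erase i, c j) * (Z / 2) ^ m ≤ ∏ j ∈ univ.erase i, b j := by
    rw [← hcard, ← prod_const, ← prod_mul_distrib]
    exact prod_le_prod (fun j hj => by have := hc j hj; positivity)
      (fun j hj => (mul_div_assoc _ _ _).symm.trans_le (hlow j hj))
  have hexp : Z ^ ((k : ℝ) - Fintype.card ι + 1) = Z ^ k / Z ^ m := by
    have hcard_pos : 1 ≤ Fintype.card ι := Fintype.card_pos_iff.mpr ⟨i⟩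
    rw [show (k : ℝ) - Fintype.card ι + 1 = k - (m : ℕ) by
        push_cast [m, Nat.cast_sub hcard_pos]; ring,
      Real.rpow_sub hZ, Real.rpow_natCast, Real.rpow_natCast]
  have hmain : b i * ((∏ j ∈ univ.erase i, c j) * (Z / 2) ^ m) ≤ C * Z ^ k :=
    calc _ ≤ b i * ∏ j ∈ univ.erase i, b j := by gcongr
      _ = ∏ j, b j := mul_prod_erase univ b (mem_univ i)
      _ ≤ C * Z ^ k := hprod
  rw [hexp, show 2 ^ m * C / (∏ j ∈ univ.erase i, c j) * (Z ^ k / Z ^ m)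
      = C * Z ^ k / ((∏ j ∈ univ.erase i, c j) * (Z / 2) ^ m) by rw [div_pow]; field_simp]
  exact (le_div_iff₀ (by positivity)).mpr hmain

/-- Lemma 1 of the paper: if `Z ≥ c₄ᵢ` then `|βᵢ| ≤ c₅ᵢ · Z^(k-n+1)`. -/
theorem stmt0 (n k : ℕ) (hn : 2 ≤ n) (hk : k < n)
    (α lam : Fin n → ℂ) (hα0 : ∀ j, α j ≠ 0) (hαinj : Function.Injective α)
    (c0 : ℝ) (hc0 : 0 < c0)
    (X Y : ℂ) (Z : ℝ) (hZ : Z = max (‖X‖) (‖Y‖)) (hZpos : 0 < Z)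
    (β : Fin n → ℂ) (hβ : ∀ j, β j = X - α j * Y + lam j)
    (hprod : ∏ j, ‖β j‖ ≤ c0 * Z ^ k)
    (i : Fin n)
    (hmin : ‖β i‖
      = (univ : Finset (Fin n)).inf' ⟨i, mem_univ i⟩ (fun j => ‖β j‖))
    (ε : ℝ) (hε0 : 0 < ε) (hε1 : ε < 1)
    (c1 c2 c3 : Fin n → ℝ)
    (hc1 : ∀ j, c1 j = ‖α j - α i‖ * min 1 (1 / ‖α i‖))
    (hc2 : ∀ j, c2 j = c0 ^ ((1 : ℝ) / n) * max 1 (‖α j‖ / ‖α i‖))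
    (hc3 : ∀ j, c3 j = max (‖lam j - lam i‖)
      (‖α i * lam j - α j * lam i‖ / ‖α i‖))
    (hZ4 : (univ.erase i).sup'
        (by
          refine Finset.card_pos.mp ?_
          rw [Finset.card_erase_of_mem (Finset.mem_univ i), Finset.card_univ, Fintype.card_fin]
          omega)
        (fun j => max ((2 * c2 j / (ε * c1 j)) ^ ((n : ℝ) / ((n : ℝ) - (k : ℝ))))
          (2 * c3 j / ((1 - ε) * c1 j))) ≤ Z) :
    ‖β i‖
      ≤ (2 ^ (n - 1) * c0 / ∏ j ∈ univ.erase i, c1 j) * Z ^ ((k : ℝ) - (n : ℝ) + 1) := by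
  have hβi : ‖β i‖ ≤ c0 ^ ((1 : ℝ) / n) * Z ^ ((k : ℝ) / n) := by
    refine le_mul_rpow_of_pow_le (norm_nonneg _) hc0.le hZpos.le (by omega) (le_trans ?_ hprod)
    have hβi_min : ∀ j ∈ univ, ‖β i‖ ≤ ‖β j‖ := fun j hj => hmin ▸ inf'_le _ hj
    simpa only [prod_const, card_univ, Fintype.card_fin] using
      prod_le_prod (fun _ _ => norm_nonneg (β i)) hβi_min
  have hc1pos : ∀ j ∈ univ.erase i, 0 < c1 j := fun j hj => by
    have hji : α j - α i ≠ 0 := sub_ne_zero.mpr (hαinj.ne (ne_of_mem_erase hj))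
    rw [hc1]
    exact mul_pos (norm_pos_iff.mpr hji) (lt_min one_pos (by simpa using hα0 i))
  have hlow : ∀ j ∈ univ.erase i, c1 j * Z / 2 ≤ ‖β j‖ := fun j hj => by
    obtain ⟨hZc2, hZc3⟩ := max_le_iff.mp ((sup'_le_iff _ _).mp hZ4 j hj)
    have hεc1 : 0 < ε * c1 j := mul_pos hε0 (hc1pos j hj)
    have hc2β : max 1 (‖α j‖ / ‖α i‖) * ‖β i‖ ≤ c2 j * Z ^ ((k : ℝ) / n) := by
      rw [hc2, mul_comm (c0 ^ _), mul_assoc]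
      exact mul_le_mul_of_nonneg_left hβi (zero_le_one.trans (le_max_left _ _))
    have hc2Z : 2 * c2 j / (ε * c1 j) * Z ^ ((k : ℝ) / n) ≤ Z :=
      mul_rpow_le_of_rpow_div_sub_le (div_nonneg (by rw [hc2]; positivity) hεc1.le) hZpos
        (by positivity) (by exact_mod_cast hk) hZc2
    rw [div_mul_eq_mul_div, div_le_iff₀ hεc1] at hc2Z
    rw [div_le_iff₀ (mul_pos (sub_pos.mpr hε1) (hc1pos j hj))] at hZc3
    have hgeom := norm_sub_mul_min_mul_max_le X Y (α i) (α j) (lam i) (lam j) (hα0 i)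
    rw [← hβ, ← hβ, ← hc1, ← hc3, ← hZ] at hgeom
    linarith
  simpa only [Fintype.card_fin] using
    le_mul_rpow_of_prod_le (b := fun j => ‖β j‖) hZpos (norm_nonneg _) hc1pos hlow hprod
end

section
/- Suppose b_1 is a nonzero vector of L satisfying ‖b_1‖² ≤ 2^{2m} ‖v‖² for every nonzero v ∈ L (the property of the first vector of an LLL-reduced basis of L) and ‖b_1‖ ≥ √((2m+1) · 2^{2m}) · A_0. Let x_1, …, x_m, y_1, …, y_m ∈ ℤ, set A = max(max_j |x_j|, max_j |y_j|), and suppose 2c_λ ≤ A ≤ A_0 and that β := ∑_{k=1}^m x_k ω_k − α ∑_{k=1}^m y_k ω_k + λ satisfies |β| ≤ c_9 · A^{k+1−n}. Then A ≤ (2 c_9 H / (√3 · A_0))^{1/(n−k−1)}. (This is Theorem 1 of the paper, with the cited LLL inequality taken as a hypothesis on b_1.) -/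
/-! The lattice vector `v` with coefficient vector `(x, y, 1)` is nonzero, so the LLL property
of `b₁` and the lower bound on `‖b₁‖` give `‖v‖² ≥ (2m+1) A₀²`. The first `2m + 1` coordinates
of `v` contribute at most `2m A₀² + 1 ≤ (2m + 1/4) A₀²` (as `A₀ ≥ A ≥ 2`), so the last two,
of total square `H² |β|²`, force `H |β| ≥ (√3/2) A₀`. Together with `|β| ≤ c₉ A^(k+1-n)` this
bounds `A^(n-k-1)` by `2 c₉ H / (√3 A₀)`. -/

open Finset

/-- The lattice vector with coefficient vector `(x₁,…,x_m,y₁,…,y_m,t)` of the lattice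
used in the reduction step: the first `2m` coordinates are `x₁,…,x_m,y₁,…,y_m`, the
`(2m+1)`-st coordinate is `t`, and the last two coordinates are `H·Re(β)` and `H·Im(β)`
where `β = ∑ₖ xₖ ωₖ − α ∑ₖ yₖ ωₖ + t·λ`. -/
noncomputable def latVec (m : ℕ) (ω : Fin m → ℂ) (α lam : ℂ) (H : ℝ)
    (x y : Fin m → ℤ) (t : ℤ) : EuclideanSpace ℝ (Fin (2 * m + 3)) :=
  WithLp.toLp 2 fun j =>
    if hj : (j : ℕ) < m then (x ⟨j, hj⟩ : ℝ)
    else if hj2 : (j : ℕ) < 2 * m then (y ⟨(j : ℕ) - m, by omega⟩ : ℝ)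
    else if (j : ℕ) = 2 * m then (t : ℝ)
    else if (j : ℕ) = 2 * m + 1 then
      H * (∑ k, (x k : ℝ) * (ω k).re - ∑ k, (y k : ℝ) * (α * ω k).re + (t : ℝ) * lam.re)
    else
      H * (∑ k, (x k : ℝ) * (ω k).im - ∑ k, (y k : ℝ) * (α * ω k).im + (t : ℝ) * lam.im)

noncomputable def latticeBeta {m : ℕ} (ω : Fin m → ℂ) (α lam : ℂ) (x y : Fin m → ℤ) (t : ℤ) :
    ℂ :=
  ∑ k, (x k : ℂ) * ω k - α * ∑ k, (y k : ℂ) * ω k + t * lam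

lemma sum_sq_le_card_mul_sq {ι : Type*} [Fintype ι] {f : ι → ℝ} {A : ℝ}
    (hf : ∀ i, |f i| ≤ A) : ∑ i, f i ^ 2 ≤ Fintype.card ι * A ^ 2 := by
  calc ∑ i, f i ^ 2 ≤ ∑ _i : ι, A ^ 2 :=
        Finset.sum_le_sum fun i _ => sq_le_sq' (abs_le.mp (hf i)).1 (abs_le.mp (hf i)).2
    _ = Fintype.card ι * A ^ 2 := by simp

lemma mul_sq_le_sq_of_sqrt_mul_le {a b c d w : ℝ} (hc : 0 < c) (hd : 0 ≤ d) (ha : 0 ≤ a)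
    (hb : √(d * c) * a ≤ b) (hbw : b ^ 2 ≤ c * w ^ 2) : d * a ^ 2 ≤ w ^ 2 := by
  have hsq : d * c * a ^ 2 ≤ b ^ 2 := by
    calc d * c * a ^ 2 = (√(d * c) * a) ^ 2 := by
          rw [mul_pow, Real.sq_sqrt (by positivity)]
      _ ≤ b ^ 2 := pow_le_pow_left₀ (by positivity) hb 2
  nlinarith

lemma le_rpow_one_div_of_le_mul_rpow_neg {A B C e : ℝ} (hA : 0 < A) (hB : 0 < B) (he : 0 < e)
    (h : B ≤ C * A ^ (-e)) : A ≤ (C / B) ^ (1 / e) := by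
  have hAe : 0 < A ^ e := Real.rpow_pos_of_pos hA e
  rw [Real.rpow_neg hA.le, ← div_eq_mul_inv, le_div_iff₀ hAe] at h
  have hpow : A ^ e ≤ C / B := by rwa [le_div_iff₀ hB, mul_comm]
  rw [one_div, Real.le_rpow_inv_iff_of_pos hA.le (hAe.le.trans hpow) he]
  exact hpow

section latVec

variable {m : ℕ} (ω : Fin m → ℂ) (α lam : ℂ) (H : ℝ) (x y : Fin m → ℤ) (t : ℤ)

lemma latticeBeta_re : (latticeBeta ω α lam x y t).re =
    ∑ k, (x k : ℝ) * (ω k).re - ∑ k, (y k : ℝ) * (α * ω k).re + t * lam.re := by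
  simp [latticeBeta, Complex.re_sum, Finset.mul_sum, mul_left_comm α]

lemma latticeBeta_im : (latticeBeta ω α lam x y t).im =
    ∑ k, (x k : ℝ) * (ω k).im - ∑ k, (y k : ℝ) * (α * ω k).im + t * lam.im := by
  simp [latticeBeta, Complex.im_sum, Finset.mul_sum, mul_left_comm α]

lemma norm_latVec_sq : ‖latVec m ω α lam H x y t‖ ^ 2 =
    ∑ i, (x i : ℝ) ^ 2 + ∑ i, (y i : ℝ) ^ 2 + t ^ 2 + H ^ 2 * ‖latticeBeta ω α lam x y t‖ ^ 2 := by
  let e : Fin (2 * m + 3) ≃ (Fin m ⊕ Fin m) ⊕ Fin 3 :=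
    (finCongr (by omega : 2 * m + 3 = m + m + 3)).trans
      ((Equiv.sumCongr finSumFinEquiv (Equiv.refl _)).trans finSumFinEquiv).symm
  rw [EuclideanSpace.norm_sq_eq, ← e.symm.sum_comp, Fintype.sum_sum_type, Fintype.sum_sum_type,
    Fin.sum_univ_three, Complex.sq_norm, Complex.normSq_apply, latticeBeta_re, latticeBeta_im]
  simp [e, latVec, two_mul, show ¬ m + m + 1 < m by omega, show ¬ m + m + 2 < m by omega]
  simp only [mul_pow, sq_abs]
  ring

lemma latVec_ne_zero {t : ℤ} (ht : t ≠ 0) : latVec m ω α lam H x y t ≠ 0 := by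
  have ht' : (t : ℝ) ≠ 0 := Int.cast_ne_zero.mpr ht
  have hpos : 0 < ‖latVec m ω α lam H x y t‖ ^ 2 := by
    rw [norm_latVec_sq]
    positivity
  exact norm_ne_zero_iff.mp (sq_pos_iff.mp hpos)

lemma sqrt_three_div_two_mul_le_mul_norm_latticeBeta {A0 : ℝ} (hH : 0 ≤ H) (hA0 : 2 ≤ A0)
    (hx : ∀ i, |(x i : ℝ)| ≤ A0) (hy : ∀ i, |(y i : ℝ)| ≤ A0)
    (hv : (2 * m + 1) * A0 ^ 2 ≤ ‖latVec m ω α lam H x y 1‖ ^ 2) :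
    √3 / 2 * A0 ≤ H * ‖latticeBeta ω α lam x y 1‖ := by
  have hxsum := sum_sq_le_card_mul_sq hx
  have hysum := sum_sq_le_card_mul_sq hy
  rw [Fintype.card_fin] at hxsum hysum
  rw [norm_latVec_sq] at hv
  have hsq : (√3 / 2 * A0) ^ 2 ≤ (H * ‖latticeBeta ω α lam x y 1‖) ^ 2 := by
    rw [mul_pow, div_pow, Real.sq_sqrt (by norm_num : (0 : ℝ) ≤ 3), mul_pow]
    push_cast at hv
    nlinarith
  exact (pow_le_pow_iff_left₀ (by positivity) (by positivity) two_ne_zero).mp hsq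

end latVec

/-- Theorem 1 of the paper (the LLL reduction step), with the cited LLL inequality
`‖b₁‖² ≤ 2^(2m) ‖v‖²` for all nonzero lattice vectors `v` taken as a hypothesis. -/
theorem stmt7 (m n k : ℕ) (hm : 1 ≤ m) (hk : k + 2 ≤ n)
    (ω : Fin m → ℂ) (α lam : ℂ)
    (H A0 c9 clam : ℝ) (hH : 0 < H) (hclam : 1 ≤ clam)
    (L : Set (EuclideanSpace ℝ (Fin (2 * m + 3))))
    (hL : L = {v | ∃ x y : Fin m → ℤ, ∃ t : ℤ, v = latVec m ω α lam H x y t})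
    (b1 : EuclideanSpace ℝ (Fin (2 * m + 3)))
    (hLLL : ∀ v ∈ L, v ≠ 0 → ‖b1‖ ^ 2 ≤ 2 ^ (2 * m) * ‖v‖ ^ 2)
    (hb1 : ‖b1‖ ≥ Real.sqrt ((2 * m + 1) * 2 ^ (2 * m)) * A0)
    (x y : Fin m → ℤ) (A : ℝ)
    (hA : A = max
      (Finset.univ.sup' ⟨⟨0, by omega⟩, mem_univ _⟩ (fun j => (|x j| : ℝ)))
      (Finset.univ.sup' ⟨⟨0, by omega⟩, mem_univ _⟩ (fun j => (|y j| : ℝ))))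
    (hAlow : 2 * clam ≤ A) (hAup : A ≤ A0)
    (β : ℂ) (hβ : β = ∑ k, (x k : ℂ) * ω k - α * ∑ k, (y k : ℂ) * ω k + lam)
    (hβsmall : ‖β‖ ≤ c9 * A ^ ((k : ℝ) + 1 - (n : ℝ))) :
    A ≤ (2 * c9 * H / (Real.sqrt 3 * A0)) ^ ((1 : ℝ) / ((n : ℝ) - (k : ℝ) - 1)) := by
  have hA0 : 0 < A0 := by linarith
  have hxA : ∀ i, |(x i : ℝ)| ≤ A0 := fun i => (hA ▸ le_max_of_le_left
    (Finset.le_sup' (fun j => |(x j : ℝ)|) (mem_univ i))).trans hAup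
  have hyA : ∀ i, |(y i : ℝ)| ≤ A0 := fun i => (hA ▸ le_max_of_le_right
    (Finset.le_sup' (fun j => |(y j : ℝ)|) (mem_univ i))).trans hAup
  have hv : (2 * m + 1) * A0 ^ 2 ≤ ‖latVec m ω α lam H x y 1‖ ^ 2 :=
    mul_sq_le_sq_of_sqrt_mul_le (by positivity) (by positivity) hA0.le hb1
      (hLLL _ (hL ▸ ⟨x, y, 1, rfl⟩) (latVec_ne_zero ω α lam H x y one_ne_zero))
  obtain rfl : β = latticeBeta ω α lam x y 1 := by simp [hβ, latticeBeta]
  have hlower := sqrt_three_div_two_mul_le_mul_norm_latticeBeta ω α lam H x y hH.le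
    (by linarith) hxA hyA hv
  have hnk : (0 : ℝ) < n - k - 1 := by
    have : (k : ℝ) + 2 ≤ n := by exact_mod_cast hk
    linarith
  have hle : √3 / 2 * A0 ≤ H * c9 * A ^ (-((n : ℝ) - k - 1)) := by
    rw [show -((n : ℝ) - k - 1) = k + 1 - n by ring, mul_assoc]
    exact hlower.trans (mul_le_mul_of_nonneg_left hβsmall hH.le)
  convert le_rpow_one_div_of_le_mul_rpow_neg (by linarith) (by positivity) hnk hle using 2
  field_simp
end
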